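/- Let T be a set, Y ⊆ ℝ^T a Lindelöf subspace with the topology of pointwise convergence, and g : Y → ℝ a continuous function. Then g depends on at most countably many coordinates: there exists a set S ⊆ T with |S| ≤ ℵ₀ such that g(y′) = g(y″) for all y′, y″ ∈ Y with y′|_S = y″|_S. -/
import Mathlib


/-- a continuous real-valued function on a Lindelöf subspace
`Y ⊆ ℝ^T` (with the pointwise convergence topology) depends on at most countably
many coordinates. -/
theorem continuous_depends_on_countably_many_coordinates_of_lindelof {T : Type*}
    (Y : Set (T → ℝ)) [LindelofSpace Y] (g : Y → ℝ) (hg : Continuous g) :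
    ∃ S : Set T, S.Countable ∧ ∀ y' y'' : Y,
      (∀ t ∈ S, (y' : T → ℝ) t = (y'' : T → ℝ) t) → g y' = g y'' := by
  -- For each `n` and `y`, find a basic neighborhood of `y` depending on finitely many
  -- coordinates on which `g` varies by less than `1/(n+1)` from `g y`.
  have key : ∀ (n : ℕ) (y : Y), ∃ (I : Finset T) (u : T → Set ℝ),
      (∀ a ∈ I, IsOpen (u a) ∧ (y : T → ℝ) a ∈ u a) ∧
      ∀ z : Y, (∀ a ∈ I, (z : T → ℝ) a ∈ u a) → dist (g z) (g y) < 1 / (n + 1) := by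
    intro n y
    have hε : (0 : ℝ) < 1 / (n + 1) := by positivity
    have hopen : IsOpen (g ⁻¹' Metric.ball (g y) (1 / (n + 1))) :=
      hg.isOpen_preimage _ Metric.isOpen_ball
    rw [isOpen_induced_iff] at hopen
    obtain ⟨W, hW, hWeq⟩ := hopen
    have hyW : (y : T → ℝ) ∈ W := by
      have : y ∈ Subtype.val ⁻¹' W := by
        rw [hWeq]; simp only [Set.mem_preimage, Metric.mem_ball, dist_self]; exact hε
      exact this
    obtain ⟨I, u, hIu, hsub⟩ := (isOpen_pi_iff.1 hW) _ hyW
    refine ⟨I, u, hIu, fun z hz => ?_⟩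
    have hzW : (z : T → ℝ) ∈ W := hsub (fun a ha => hz a ha)
    have : z ∈ Subtype.val ⁻¹' W := hzW
    rw [hWeq] at this
    exact this
  choose I u hIu hball using key
  -- the open cover for each `n`
  set U : ℕ → Y → Set Y := fun n y => {z : Y | ∀ a ∈ I n y, (z : T → ℝ) a ∈ u n y a} with hU
  have hUopen : ∀ n y, IsOpen (U n y) := by
    intro n y
    have : U n y = Subtype.val ⁻¹' ((I n y : Set T).pi (u n y)) := by
      ext z; simp [Set.mem_pi, hU]
    rw [this]
    exact ((isOpen_set_pi (I n y).finite_toSet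
      (fun a ha => (hIu n y a ha).1))).preimage continuous_subtype_val
  have hUcover : ∀ n : ℕ, (Set.univ : Set Y) ⊆ ⋃ y, U n y := by
    intro n z _
    exact Set.mem_iUnion.2 ⟨z, fun a ha => (hIu n z a ha).2⟩
  -- countable subcovers
  have hC : ∀ n : ℕ, ∃ C : Set Y, C.Countable ∧ (Set.univ : Set Y) ⊆ ⋃ y ∈ C, U n y :=
    fun n => isLindelof_univ.elim_countable_subcover (U n) (hUopen n) (hUcover n)
  choose C hCcount hCcover using hC
  refine ⟨⋃ n, ⋃ y ∈ C n, (I n y : Set T), ?_, ?_⟩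
  · exact Set.countable_iUnion fun n =>
      (hCcount n).biUnion fun y _ => (I n y).countable_toSet
  · intro y' y'' hagree
    apply eq_of_forall_dist_le
    intro δ hδ
    obtain ⟨n, hn⟩ := exists_nat_one_div_lt (half_pos hδ)
    obtain ⟨y₀, hy₀C, hy₀⟩ := Set.mem_iUnion₂.1 (hCcover n (Set.mem_univ y'))
    have hy'' : y'' ∈ U n y₀ := by
      intro a ha
      have haS : a ∈ ⋃ n, ⋃ y ∈ C n, (I n y : Set T) :=
        Set.mem_iUnion.2 ⟨n, Set.mem_iUnion₂.2 ⟨y₀, hy₀C, ha⟩⟩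
      have := hagree a haS
      rw [← this]
      exact hy₀ a ha
    have h1 : dist (g y') (g y₀) < 1 / (n + 1) := hball n y₀ y' hy₀
    have h2 : dist (g y'') (g y₀) < 1 / (n + 1) := hball n y₀ y'' hy''
    calc dist (g y') (g y'') ≤ dist (g y') (g y₀) + dist (g y'') (g y₀) :=
          dist_triangle_right _ _ _
      _ ≤ δ / 2 + δ / 2 := add_le_add (h1.trans hn).le (h2.trans hn).le
      _ = δ := add_halves δ
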